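/- Fix d ≥ 2, α ∈ (0,d], and m with 1 ≤ m ≤ d. Let K ⊂ ℝ^d be a compact smooth m-dimensional embedded submanifold of ℝ^d and let Q : ℝ^d → ℝ be continuously differentiable. For n ≥ 2 and points x_2,…,x_n ∈ K define f : ℝ^d → ℝ by f(y) = exp(−∑_{j=2}^n |y−x_j|^{−α} − 2nQ(y)) for y ∉ {x_2,…,x_n}, and f(x_j) = 0 (this extension is differentiable with ∇f(x_j) = 0). Then there exist constants C_n > 0, depending only on K, Q, α, with C_n^{1/n} → 1 as n → ∞, such that for all n ≥ 2 and all choices x_2,…,x_n ∈ K, sup_{y ∈ K} |∇f(y)| ≤ C_n · sup_{y ∈ K} f(y). -/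

import Mathlib

open MeasureTheory Manifold Filter
open scoped Classical

/-- The Riesz-discretization function `f(y) = exp(-∑_j |y - x_j|^{-α} - 2nQ(y))` for
`y ∉ {x_2,…,x_n}`, extended by `0` at the points `x_j`. -/
noncomputable def rieszF {d : ℕ} (α : ℝ) (n : ℕ) (Q : EuclideanSpace ℝ (Fin d) → ℝ)
    (x : Fin (n - 1) → EuclideanSpace ℝ (Fin d)) (y : EuclideanSpace ℝ (Fin d)) : ℝ :=
  if y ∈ Set.range x then 0
  else Real.exp (-(∑ j, ‖y - x j‖ ^ (-α)) - 2 * (n : ℝ) * Q y)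

/-!
Near a point `x_j` the function `f` is bounded by a multiple of `exp (-|y - x_j|^{-α})`, so it
vanishes to infinite order and `∇f(x_j) = 0`. Elsewhere
`|∇f(y)| ≤ f(y) (α ∑ r_j^{-α-1} + 2n|∇Q(y)|)` with `r_j = |y - x_j|`. Writing `s_j = r_j^{-α}`,
the power `r_j^{-α-1} = s_j^{1+1/α}` is at most `c X^k exp (s_j / X)` for every scale `X ≥ 1`, and
`f(y) exp (∑ s_j / X) ≤ f(y)^{1-1/X} e^{2n‖Q‖/X} ≤ sup_K f · (sup_K f)^{-1/X} e^{2n‖Q‖/X}`.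
Because `K` contains a nondegenerate continuum, some point of `K` stays at distance `≳ 1/n` from
all the `x_j`, whence `sup_K f ≥ exp (-O(n^{1+α}))`. Taking `X` of that polynomial size makes
every factor polynomial in `n`, so `C_n^{1/n} → 1`.
-/

open Topology Asymptotics
open scoped Nat

theorem Real.exists_rpow_le_mul_pow_mul_exp_div {p : ℝ} (hp : 0 ≤ p) :
    ∃ c > 0, ∃ k : ℕ, ∀ X t : ℝ, 1 ≤ X → 0 ≤ t → t ^ p ≤ c * X ^ k * Real.exp (t / X) := by
  refine ⟨⌈p⌉₊ ! + 1, by positivity, ⌈p⌉₊, fun X t hX ht => ?_⟩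
  set k := ⌈p⌉₊
  have h_one : 1 ≤ Real.exp (t / X) := Real.one_le_exp (by positivity)
  have h_Xk : 1 ≤ X ^ k := one_le_pow₀ hX
  have h_pow : t ^ p ≤ t ^ k + 1 := by
    rcases le_or_gt t 1 with h | h
    · linarith [Real.rpow_le_one ht h hp, pow_nonneg ht k]
    · rw [← Real.rpow_natCast]
      linarith [Real.rpow_le_rpow_of_exponent_le h.le (Nat.le_ceil p)]
  -- the `k`-th Taylor term of `exp (t / X)`
  have h_taylor : t ^ k ≤ k ! * X ^ k * Real.exp (t / X) := by
    have := Real.pow_div_factorial_le_exp (t / X) (by positivity) k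
    rw [div_pow, div_div, div_le_iff₀ (by positivity)] at this
    linarith
  nlinarith

theorem Real.exists_exp_neg_rpow_neg_le_mul_sq {α : ℝ} (hα : 0 < α) :
    ∃ c, ∀ t : ℝ, 0 < t → Real.exp (-t ^ (-α)) ≤ c * t ^ 2 := by
  obtain ⟨c, -, k, hc⟩ := exists_rpow_le_mul_pow_mul_exp_div (p := 2 / α) (by positivity)
  refine ⟨c, fun t ht => ?_⟩
  have h := hc 1 (t ^ (-α)) le_rfl (by positivity)
  rw [one_pow, mul_one, div_one, ← Real.rpow_mul ht.le,
    show -α * (2 / α) = -2 by field_simp, Real.rpow_neg ht.le, Real.rpow_two,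
    inv_le_iff_one_le_mul₀ (by positivity)] at h
  rw [Real.exp_neg, inv_le_iff_one_le_mul₀ (Real.exp_pos _)]
  linarith

theorem hasFDerivAt_zero_of_norm_le_exp_neg_rpow {E F : Type*} [NormedAddCommGroup E]
    [NormedSpace ℝ E] [NormedAddCommGroup F] [NormedSpace ℝ F] {f : E → F} {y : E} {α c : ℝ}
    (hα : 0 < α) (hy : f y = 0)
    (hf : ∀ᶠ w in 𝓝[≠] y, ‖f w‖ ≤ c * Real.exp (-‖w - y‖ ^ (-α))) :
    HasFDerivAt f (0 : E →L[ℝ] F) y := by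
  obtain ⟨B, hB⟩ := Real.exists_exp_neg_rpow_neg_le_mul_sq hα
  refine IsBigO.hasFDerivAt (n := 2) (IsBigO.of_bound (|c| * B) ?_) one_lt_two
  filter_upwards [eventually_nhdsWithin_iff.mp hf] with w hw
  rcases eq_or_ne w y with rfl | hne
  · simp [hy]
  · have ht : 0 < ‖w - y‖ := norm_pos_iff.mpr (sub_ne_zero.mpr hne)
    calc ‖f w‖ ≤ c * Real.exp (-‖w - y‖ ^ (-α)) := hw hne
      _ ≤ |c| * Real.exp (-‖w - y‖ ^ (-α)) := by gcongr; exact le_abs_self c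
      _ ≤ |c| * (B * ‖w - y‖ ^ 2) := by gcongr; exact hB _ ht
      _ = |c| * B * ‖‖w - y‖ ^ 2‖ := by rw [norm_pow, norm_norm, mul_assoc]

theorem differentiableAt_norm_sub_rpow {E : Type*} [NormedAddCommGroup E] [InnerProductSpace ℝ E]
    {a y : E} (p : ℝ) (hy : y ≠ a) : DifferentiableAt ℝ (fun w => ‖w - a‖ ^ p) y :=
  ((differentiableAt_id.sub_const a).norm ℝ (sub_ne_zero.mpr hy)).rpow_const
    (Or.inl (norm_pos_iff.mpr (sub_ne_zero.mpr hy)).ne')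

theorem norm_fderiv_norm_sub_rpow_le {E : Type*} [NormedAddCommGroup E] [InnerProductSpace ℝ E]
    {a y : E} (p : ℝ) (hy : y ≠ a) :
    ‖fderiv ℝ (fun w => ‖w - a‖ ^ p) y‖ ≤ |p| * ‖y - a‖ ^ (p - 1) := by
  have hr : 0 < ‖y - a‖ := norm_pos_iff.mpr (sub_ne_zero.mpr hy)
  have hN : DifferentiableAt ℝ (fun w => ‖w - a‖) y :=
    (differentiableAt_id.sub_const a).norm ℝ (sub_ne_zero.mpr hy)
  have hN_le : ‖fderiv ℝ (fun w => ‖w - a‖) y‖ ≤ 1 := by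
    have hlip : LipschitzWith 1 (fun w => ‖w - a‖) := by
      simpa only [dist_eq_norm] using LipschitzWith.dist_left a
    simpa using hN.hasFDerivAt.le_of_lipschitz hlip
  rw [(hN.hasFDerivAt.rpow_const (Or.inl hr.ne')).fderiv, norm_smul, Real.norm_eq_abs, abs_mul,
    abs_of_pos (Real.rpow_pos_of_pos hr _)]
  calc |p| * ‖y - a‖ ^ (p - 1) * ‖fderiv ℝ (fun w => ‖w - a‖) y‖
      ≤ |p| * ‖y - a‖ ^ (p - 1) * 1 := by gcongr
    _ = |p| * ‖y - a‖ ^ (p - 1) := mul_one _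

theorem norm_gradient_eq_norm_fderiv {𝕜 F : Type*} [RCLike 𝕜] [NormedAddCommGroup F]
    [InnerProductSpace 𝕜 F] [CompleteSpace F] (f : F → 𝕜) (y : F) :
    ‖gradient f y‖ = ‖fderiv 𝕜 f y‖ :=
  (InnerProductSpace.toDual 𝕜 F).symm.norm_map _

theorem exists_forall_le_dist_of_isPreconnected {X ι : Type*} [PseudoMetricSpace X] [Fintype ι]
    {C : Set X} (hC : IsPreconnected C) {z₀ z₁ : X} (h₀ : z₀ ∈ C) (h₁ : z₁ ∈ C) (x : ι → X)
    {ρ : ℝ} (hcard : Fintype.card ι * (2 * ρ) < dist z₀ z₁) :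
    ∃ z ∈ C, ∀ j, ρ ≤ dist z (x j) := by
  by_contra! hcon
  -- `dist · z₀` maps `C` onto an interval containing `[0, dist z₀ z₁]`, which the `ρ`-balls
  -- around the numbers `dist (x j) z₀` would have to cover
  have h_img : Set.Icc 0 (dist z₀ z₁) ⊆ (dist · z₀) '' C :=
    (hC.image _ (continuous_id.dist continuous_const).continuousOn).Icc_subset
      ⟨z₀, h₀, dist_self z₀⟩ ⟨z₁, h₁, dist_comm z₁ z₀⟩
  have h_cover : Set.Icc 0 (dist z₀ z₁) ⊆ ⋃ j, Metric.ball (dist (x j) z₀) ρ := by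
    intro t ht
    obtain ⟨z, hzC, rfl⟩ := h_img ht
    obtain ⟨j, hj⟩ := hcon z hzC
    exact Set.mem_iUnion.mpr ⟨j, (abs_dist_sub_le z (x j) z₀).trans_lt hj⟩
  have hρ : 0 < ρ := by
    obtain ⟨j, hj⟩ := hcon z₀ h₀
    exact dist_nonneg.trans_lt hj
  have h_vol := (measure_mono h_cover).trans (measure_iUnion_fintype_le volume _)
  simp only [Real.volume_Icc, Real.volume_ball, Finset.sum_const, Finset.card_univ,
    nsmul_eq_mul, sub_zero] at h_vol
  rw [← ENNReal.ofReal_natCast, ← ENNReal.ofReal_mul (Nat.cast_nonneg _),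
    ENNReal.ofReal_le_ofReal_iff (by positivity)] at h_vol
  linarith

theorem exists_isPreconnected_subset_range_nontrivial {H M Y : Type*} [NormedAddCommGroup H]
    [NormedSpace ℝ H] [Nontrivial H] [TopologicalSpace M] [ChartedSpace H M] [Nonempty M]
    [TopologicalSpace Y] {g : M → Y} (hg : Continuous g) (hinj : Function.Injective g) :
    ∃ C ⊆ Set.range g, IsPreconnected C ∧ C.Nontrivial := by
  let p : M := Classical.arbitrary M
  let e := chartAt H p
  obtain ⟨r, hr, hball⟩ :=
    Metric.isOpen_iff.mp e.open_target _ (e.map_source (mem_chart_source H p))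
  set B := Metric.ball (e p) r
  obtain ⟨v, hv⟩ := exists_norm_eq H (half_pos hr).le
  have hB : B.Nontrivial := by
    refine ⟨e p, Metric.mem_ball_self hr, e p + v, ?_, ?_⟩
    · rw [Metric.mem_ball, dist_self_add_left, hv]; linarith
    · rw [ne_eq, left_eq_add, ← norm_eq_zero, hv]; linarith
  refine ⟨g '' (e.symm '' B), Set.image_subset_range _ _,
    ((convex_ball _ r).isPreconnected.image _ (e.continuousOn_symm.mono hball)).image _
      hg.continuousOn, ?_⟩
  exact (hB.image_of_injOn (e.symm.injOn.mono (by rwa [e.symm_source]))).image hinj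

theorem tendsto_rpow_one_div_of_le_mul_pow {C : ℕ → ℝ} {R : ℝ} {p : ℕ} (hR : 0 < R)
    (hC₁ : ∀ n, 1 ≤ C n) (hC : ∀ᶠ n in atTop, C n ≤ R * n ^ p) :
    Tendsto (fun n : ℕ => C n ^ ((1 : ℝ) / n)) atTop (𝓝 1) := by
  have h_root : Tendsto (fun n : ℕ => R ^ ((1 : ℝ) / n) * ((n : ℝ) ^ ((1 : ℝ) / n)) ^ p)
      atTop (𝓝 1) := by
    have hR_root : Tendsto (fun n : ℕ => R ^ ((1 : ℝ) / n)) atTop (𝓝 1) := by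
      simpa using tendsto_const_nhds.rpow tendsto_one_div_atTop_nhds_zero_nat (Or.inl hR.ne')
    simpa using hR_root.mul
      ((tendsto_rpow_div.comp tendsto_natCast_atTop_atTop).pow p)
  refine tendsto_of_tendsto_of_tendsto_of_le_of_le' tendsto_const_nhds h_root
    (Eventually.of_forall fun n => Real.one_le_rpow (hC₁ n) (by positivity)) ?_
  filter_upwards [hC] with n hn
  calc C n ^ ((1 : ℝ) / n) ≤ (R * n ^ p) ^ ((1 : ℝ) / n) :=
        Real.rpow_le_rpow (zero_le_one.trans (hC₁ n)) hn (by positivity)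
    _ = R ^ ((1 : ℝ) / n) * ((n : ℝ) ^ ((1 : ℝ) / n)) ^ p := by
        rw [Real.mul_rpow hR.le (by positivity), Real.rpow_pow_comm (Nat.cast_nonneg n)]

/-- The scale `X` used for `n` points: `D / (2 n)` is a distance that some point of `K` keeps from
any `n - 1` points, and `M` bounds `|Q|` on `K`, so that the factor `exp ((…) / X)` in
`norm_gradient_rieszF_le` is at most `e`. -/
noncomputable def rieszScale (α D M : ℝ) (n : ℕ) : ℝ :=
  (n - 1 : ℕ) * (D / (2 * n)) ^ (-α) + 4 * n * M + 1

theorem one_le_rieszScale {α D M : ℝ} (hD : 0 ≤ D) (hM : 0 ≤ M) (n : ℕ) :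
    1 ≤ rieszScale α D M n :=
  le_add_of_nonneg_left (by positivity)

theorem rieszScale_le_mul_pow {α D M : ℝ} (hD : 0 < D) (hM : 0 ≤ M) {n : ℕ} (hn : 1 ≤ n) :
    rieszScale α D M n ≤ ((2 / D) ^ α + 4 * M + 1) * n ^ (⌈α⌉₊ + 1) := by
  have hn' : (1 : ℝ) ≤ n := by exact_mod_cast hn
  have h_rpow : (D / (2 * n)) ^ (-α) ≤ (2 / D) ^ α * n ^ ⌈α⌉₊ := by
    rw [Real.rpow_neg (by positivity), ← Real.inv_rpow (by positivity), inv_div,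
      mul_div_right_comm, Real.mul_rpow (by positivity) (by positivity), ← Real.rpow_natCast]
    gcongr
    exact Nat.le_ceil α
  have h_card : ((n - 1 : ℕ) : ℝ) ≤ n := by exact_mod_cast n.sub_le 1
  have h_pow : (n : ℝ) ≤ n ^ (⌈α⌉₊ + 1) := le_self_pow₀ hn' (by omega)
  calc rieszScale α D M n ≤ n * ((2 / D) ^ α * n ^ ⌈α⌉₊) + 4 * n * M + 1 := by
        unfold rieszScale; gcongr
    _ = (2 / D) ^ α * n ^ (⌈α⌉₊ + 1) + 4 * M * n + 1 := by ring
    _ ≤ ((2 / D) ^ α + 4 * M + 1) * n ^ (⌈α⌉₊ + 1) := by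
        nlinarith [mul_le_mul_of_nonneg_left h_pow hM]

theorem tendsto_rpow_one_div_rieszScale {α D M a b : ℝ} (hD : 0 < D) (hM : 0 ≤ M) (ha : 0 ≤ a)
    (hb : 0 ≤ b) (k : ℕ) :
    Tendsto (fun n : ℕ => (a * n * rieszScale α D M n ^ k + b * n + 1) ^ ((1 : ℝ) / n))
      atTop (𝓝 1) := by
  set A := (2 / D) ^ α + 4 * M + 1
  set q := ⌈α⌉₊ + 1
  have hX : ∀ n, 0 ≤ rieszScale α D M n ^ k := fun n =>
    pow_nonneg (zero_le_one.trans (one_le_rieszScale hD.le hM n)) k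
  refine tendsto_rpow_one_div_of_le_mul_pow (R := a * A ^ k + b + 1) (p := q * k + 1)
    (by positivity) (fun n => le_add_of_nonneg_left (by have := hX n; positivity)) ?_
  filter_upwards [eventually_ge_atTop 1] with n hn
  have hn' : (1 : ℝ) ≤ n := by exact_mod_cast hn
  have h_pow : (n : ℝ) ≤ n ^ (q * k + 1) := le_self_pow₀ hn' (by omega)
  have h_one : 1 ≤ (n : ℝ) ^ (q * k + 1) := one_le_pow₀ hn'
  have h_scale : rieszScale α D M n ^ k ≤ A ^ k * n ^ (q * k) := by
    rw [pow_mul, ← mul_pow]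
    exact pow_le_pow_left₀ (zero_le_one.trans (one_le_rieszScale hD.le hM n))
      (rieszScale_le_mul_pow hD hM hn) k
  calc a * n * rieszScale α D M n ^ k + b * n + 1
      ≤ a * n * (A ^ k * n ^ (q * k)) + b * n ^ (q * k + 1) + n ^ (q * k + 1) := by gcongr
    _ = (a * A ^ k + b + 1) * n ^ (q * k + 1) := by ring

section Riesz

variable {d n : ℕ} {α : ℝ} {Q : EuclideanSpace ℝ (Fin d) → ℝ}
  {x : Fin (n - 1) → EuclideanSpace ℝ (Fin d)} {y : EuclideanSpace ℝ (Fin d)}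

theorem rieszF_of_mem (hy : y ∈ Set.range x) : rieszF α n Q x y = 0 := if_pos hy

theorem rieszF_of_notMem (hy : y ∉ Set.range x) :
    rieszF α n Q x y = Real.exp (-(∑ j, ‖y - x j‖ ^ (-α)) - 2 * n * Q y) := if_neg hy

theorem rieszF_nonneg : 0 ≤ rieszF α n Q x y := by
  unfold rieszF; split_ifs <;> positivity

theorem rieszF_le_exp : rieszF α n Q x y ≤ Real.exp (-(2 * n * Q y)) := by
  by_cases hy : y ∈ Set.range x
  · rw [rieszF_of_mem hy]; positivity
  · rw [rieszF_of_notMem hy, Real.exp_le_exp]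
    have : 0 ≤ ∑ j, ‖y - x j‖ ^ (-α) := by positivity
    linarith

theorem rieszF_eventuallyEq (hy : y ∉ Set.range x) :
    rieszF α n Q x =ᶠ[𝓝 y] fun w => Real.exp (-(∑ j, ‖w - x j‖ ^ (-α)) - 2 * n * Q w) := by
  filter_upwards [(Set.finite_range x).isClosed.isOpen_compl.mem_nhds hy] with w hw
  exact rieszF_of_notMem hw

theorem hasFDerivAt_rieszF_of_mem (hα : 0 < α) (hQ : ContinuousAt Q y) (hy : y ∈ Set.range x) :
    HasFDerivAt (rieszF α n Q x) (0 : StrongDual ℝ _) y := by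
  obtain ⟨j, rfl⟩ := hy
  refine hasFDerivAt_zero_of_norm_le_exp_neg_rpow (c := Real.exp (-(2 * n * (Q (x j) - 1)))) hα
    (rieszF_of_mem ⟨j, rfl⟩) (nhdsWithin_le_nhds ?_)
  filter_upwards [hQ.eventually (lt_mem_nhds (sub_one_lt (Q (x j))))] with w hw
  rw [Real.norm_of_nonneg rieszF_nonneg]
  by_cases hwx : w ∈ Set.range x
  · rw [rieszF_of_mem hwx]; positivity
  · have h_single : ‖w - x j‖ ^ (-α) ≤ ∑ l, ‖w - x l‖ ^ (-α) :=
      Finset.single_le_sum (f := fun l => ‖w - x l‖ ^ (-α)) (fun _ _ => by positivity)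
        (Finset.mem_univ j)
    have h_pot : 2 * n * (Q (x j) - 1) ≤ 2 * n * Q w := by gcongr
    rw [rieszF_of_notMem hwx, ← Real.exp_add, Real.exp_le_exp]
    linarith

theorem norm_fderiv_rieszF_le (hy : y ∉ Set.range x) (hQ : DifferentiableAt ℝ Q y) :
    ‖fderiv ℝ (rieszF α n Q x) y‖ ≤
      rieszF α n Q x y * (∑ j, |α| * ‖y - x j‖ ^ (-α - 1) + 2 * n * ‖fderiv ℝ Q y‖) := by
  have hne : ∀ j, y ≠ x j := fun j h => hy ⟨j, h.symm⟩
  have hG : HasFDerivAt (fun w => -(∑ j, ‖w - x j‖ ^ (-α)) - 2 * n * Q w)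
      (-(∑ j, fderiv ℝ (fun w => ‖w - x j‖ ^ (-α)) y) - (2 * n : ℝ) • fderiv ℝ Q y) y :=
    (HasFDerivAt.fun_sum fun j _ =>
      (differentiableAt_norm_sub_rpow (-α) (hne j)).hasFDerivAt).neg.sub
      (hQ.hasFDerivAt.const_mul _)
  rw [(rieszF_eventuallyEq hy).fderiv_eq, hG.exp.fderiv, ← rieszF_of_notMem hy, norm_smul,
    Real.norm_of_nonneg rieszF_nonneg]
  gcongr ?_ * ?_
  · exact rieszF_nonneg
  refine (norm_sub_le _ _).trans (add_le_add ?_ ?_)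
  · rw [norm_neg]
    refine (norm_sum_le _ _).trans (Finset.sum_le_sum fun j _ => ?_)
    simpa [abs_neg] using norm_fderiv_norm_sub_rpow_le (-α) (hne j)
  · rw [norm_smul, Real.norm_of_nonneg (by positivity : (0 : ℝ) ≤ 2 * n)]

theorem exp_neg_le_rieszF {ρ M : ℝ} (hα : 0 ≤ α) (hρ : 0 < ρ) (hy : ∀ j, ρ ≤ ‖y - x j‖)
    (hQ : Q y ≤ M) :
    Real.exp (-((n - 1 : ℕ) * ρ ^ (-α) + 2 * n * M)) ≤ rieszF α n Q x y := by
  have hyx : y ∉ Set.range x := by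
    rintro ⟨j, rfl⟩
    simpa using hρ.trans_le (hy j)
  have h_sum : ∑ j, ‖y - x j‖ ^ (-α) ≤ (n - 1 : ℕ) * ρ ^ (-α) := by
    simpa using Finset.sum_le_sum fun j (_ : j ∈ Finset.univ) =>
      Real.rpow_le_rpow_of_nonpos hρ (hy j) (neg_nonpos.mpr hα)
  have h_pot : 2 * n * Q y ≤ 2 * n * M := by gcongr
  rw [rieszF_of_notMem hyx, Real.exp_le_exp]
  linarith

/-- The key trade-off: a fraction `1 / X` of the Riesz potential at `y` is paid for by the
lower bound `exp (-Λ) ≤ S` on the maximum. -/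
theorem rieszF_mul_exp_le {S Λ M X : ℝ} (hy : y ∉ Set.range x) (hX : 1 ≤ X)
    (hyS : rieszF α n Q x y ≤ S) (hΛ : Real.exp (-Λ) ≤ S) (hQ : -M ≤ Q y) :
    rieszF α n Q x y * Real.exp ((∑ j, ‖y - x j‖ ^ (-α)) / X) ≤
      S * Real.exp ((Λ + 2 * n * M) / X) := by
  set T := ∑ j, ‖y - x j‖ ^ (-α)
  set u := -T - 2 * n * Q y
  have hS : 0 < S := (Real.exp_pos _).trans_le hΛ
  have hu : u ≤ Real.log S := by
    rw [rieszF_of_notMem hy] at hyS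
    exact (Real.le_log_iff_exp_le hS).mpr hyS
  have hΛS : -Λ ≤ Real.log S := (Real.le_log_iff_exp_le hS).mpr hΛ
  -- `X u + T = (X - 1) u - 2 n Q y`, and `X log S + Λ ≥ (X - 1) log S`
  have h_key : X * u + T ≤ X * Real.log S + (Λ + 2 * n * M) := by
    nlinarith [mul_le_mul_of_nonneg_left hu (sub_nonneg.mpr hX)]
  have hX₀ : 0 < X := by linarith
  rw [rieszF_of_notMem hy, ← Real.exp_log hS, ← Real.exp_add, ← Real.exp_add, Real.exp_le_exp,
    ← mul_le_mul_iff_of_pos_left hX₀]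
  field_simp
  linarith

theorem rieszF_le_sSup_image {K : Set (EuclideanSpace ℝ (Fin d))} {M : ℝ}
    (hQK : ∀ w ∈ K, -M ≤ Q w) (hy : y ∈ K) :
    rieszF α n Q x y ≤ sSup (rieszF α n Q x '' K) := by
  refine le_csSup ⟨Real.exp (2 * n * M), ?_⟩ ⟨y, hy, rfl⟩
  rintro _ ⟨w, hw, rfl⟩
  refine rieszF_le_exp.trans (Real.exp_le_exp.mpr ?_)
  nlinarith [hQK w hw, (n.cast_nonneg : (0 : ℝ) ≤ n)]

theorem rpow_neg_sub_one_le_mul_exp {B X : ℝ} (hα : 0 < α) (hB₀ : 0 ≤ B)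
    (hB : ∀ t : ℝ, 0 ≤ t → t ^ ((α + 1) / α) ≤ B * Real.exp (t / X)) (hX : 0 < X)
    (j : Fin (n - 1)) :
    ‖y - x j‖ ^ (-α - 1) ≤ B * Real.exp ((∑ l, ‖y - x l‖ ^ (-α)) / X) := by
  have h_pow : ‖y - x j‖ ^ (-α - 1) = (‖y - x j‖ ^ (-α)) ^ ((α + 1) / α) := by
    rw [← Real.rpow_mul (norm_nonneg _)]
    congr 1
    field_simp
    ring
  have h_single : ‖y - x j‖ ^ (-α) ≤ ∑ l, ‖y - x l‖ ^ (-α) :=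
    Finset.single_le_sum (f := fun l => ‖y - x l‖ ^ (-α)) (fun _ _ => by positivity)
      (Finset.mem_univ j)
  rw [h_pow]
  refine (hB _ (by positivity)).trans ?_
  gcongr

theorem norm_fderiv_rieszF_le_mul {S Λ M L X B : ℝ} (hα : 0 < α) (hX : 1 ≤ X) (hB₀ : 0 ≤ B)
    (hB : ∀ t : ℝ, 0 ≤ t → t ^ ((α + 1) / α) ≤ B * Real.exp (t / X)) (hy : y ∉ Set.range x)
    (hQ : DifferentiableAt ℝ Q y) (hyS : rieszF α n Q x y ≤ S) (hΛ : Real.exp (-Λ) ≤ S)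
    (hQy : -M ≤ Q y) (hL : ‖fderiv ℝ Q y‖ ≤ L) :
    ‖fderiv ℝ (rieszF α n Q x) y‖ ≤
      (α * n * B * Real.exp ((Λ + 2 * n * M) / X) + 2 * n * L) * S := by
  set T := ∑ j, ‖y - x j‖ ^ (-α)
  have h_tradeoff := rieszF_mul_exp_le hy hX hyS hΛ hQy
  have h_card : ((n - 1 : ℕ) : ℝ) ≤ n := by exact_mod_cast n.sub_le 1
  have hf₀ := rieszF_nonneg (α := α) (Q := Q) (x := x) (y := y)
  calc ‖fderiv ℝ (rieszF α n Q x) y‖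
      ≤ rieszF α n Q x y * (∑ j, |α| * ‖y - x j‖ ^ (-α - 1) + 2 * n * ‖fderiv ℝ Q y‖) :=
        norm_fderiv_rieszF_le hy hQ
    _ ≤ rieszF α n Q x y * (∑ _j : Fin (n - 1), α * (B * Real.exp (T / X)) + 2 * n * L) := by
        rw [abs_of_pos hα]
        gcongr with j
        exact rpow_neg_sub_one_le_mul_exp hα hB₀ hB (by linarith) j
    _ = (n - 1 : ℕ) * α * B * (rieszF α n Q x y * Real.exp (T / X)) +
          2 * n * L * rieszF α n Q x y := by
        simp only [Finset.sum_const, Finset.card_univ, Fintype.card_fin, nsmul_eq_mul]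
        ring
    _ ≤ n * α * B * (S * Real.exp ((Λ + 2 * n * M) / X)) + 2 * n * L * S := by
        have hL₀ : 0 ≤ L := (norm_nonneg _).trans hL
        gcongr
    _ = (α * n * B * Real.exp ((Λ + 2 * n * M) / X) + 2 * n * L) * S := by ring

theorem norm_gradient_rieszF_le {K : Set (EuclideanSpace ℝ (Fin d))} {M L ρ X B : ℝ}
    {z : EuclideanSpace ℝ (Fin d)} (hα : 0 < α) (hQ : Differentiable ℝ Q)
    (hQK : ∀ w ∈ K, ‖Q w‖ ≤ M) (hLK : ∀ w ∈ K, ‖fderiv ℝ Q w‖ ≤ L) (hρ : 0 < ρ) (hzK : z ∈ K)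
    (hz : ∀ j, ρ ≤ ‖z - x j‖) (hX : 1 ≤ X) (hB₀ : 0 ≤ B)
    (hB : ∀ t : ℝ, 0 ≤ t → t ^ ((α + 1) / α) ≤ B * Real.exp (t / X)) (hy : y ∈ K) :
    ‖gradient (rieszF α n Q x) y‖ ≤
      (α * n * B * Real.exp (((n - 1 : ℕ) * ρ ^ (-α) + 4 * n * M) / X) + 2 * n * L) *
        sSup (rieszF α n Q x '' K) := by
  have hQ_abs : ∀ w ∈ K, |Q w| ≤ M := by simpa only [Real.norm_eq_abs] using hQK
  have hQ_lower : ∀ w ∈ K, -M ≤ Q w := fun w hw => (abs_le.mp (hQ_abs w hw)).1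
  rw [norm_gradient_eq_norm_fderiv]
  by_cases hyx : y ∈ Set.range x
  · rw [(hasFDerivAt_rieszF_of_mem hα (hQ y).continuousAt hyx).fderiv, norm_zero]
    have hL₀ : 0 ≤ L := (norm_nonneg _).trans (hLK y hy)
    have hS₀ := rieszF_nonneg.trans (rieszF_le_sSup_image (α := α) (Q := Q) (x := x) hQ_lower hy)
    positivity
  have hΛ := (exp_neg_le_rieszF (x := x) (Q := Q) hα.le hρ hz
    ((le_abs_self _).trans (hQ_abs z hzK))).trans (rieszF_le_sSup_image hQ_lower hzK)
  convert norm_fderiv_rieszF_le_mul hα hX hB₀ hB hyx (hQ y) (rieszF_le_sSup_image hQ_lower hy) hΛ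
    (hQ_lower y hy) (hLK y hy) using 5
  ring

end Riesz

theorem exists_norm_gradient_rieszF_le_mul_sSup {d : ℕ} {α : ℝ} (hα : 0 < α)
    {K C : Set (EuclideanSpace ℝ (Fin d))} (hK : IsCompact K) (hCK : C ⊆ K)
    (hC : IsPreconnected C) (hC_nontriv : C.Nontrivial) {Q : EuclideanSpace ℝ (Fin d) → ℝ}
    (hQ : ContDiff ℝ 1 Q) :
    ∃ Cn : ℕ → ℝ, (∀ n, 0 < Cn n) ∧
      Tendsto (fun n : ℕ => Cn n ^ ((1 : ℝ) / n)) atTop (𝓝 1) ∧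
      ∀ n : ℕ, 1 ≤ n → ∀ (x : Fin (n - 1) → EuclideanSpace ℝ (Fin d)), ∀ y ∈ K,
        ‖gradient (rieszF α n Q x) y‖ ≤ Cn n * sSup (rieszF α n Q x '' K) := by
  obtain ⟨z₀, hz₀, z₁, hz₁, hz⟩ := hC_nontriv
  set D := dist z₀ z₁
  have hD : 0 < D := dist_pos.mpr hz
  obtain ⟨M, hM⟩ := hK.exists_bound_of_continuousOn hQ.continuous.continuousOn
  obtain ⟨L, hL⟩ :=
    hK.exists_bound_of_continuousOn (hQ.continuous_fderiv one_ne_zero).continuousOn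
  have hM₀ : 0 ≤ M := (norm_nonneg _).trans (hM z₀ (hCK hz₀))
  have hL₀ : 0 ≤ L := (norm_nonneg _).trans (hL z₀ (hCK hz₀))
  obtain ⟨c, hc, k, hck⟩ := Real.exists_rpow_le_mul_pow_mul_exp_div (p := (α + 1) / α)
    (by positivity)
  set X := rieszScale α D M
  have hX := one_le_rieszScale (α := α) hD.le hM₀
  have hXk : ∀ n, 0 ≤ X n ^ k := fun n => pow_nonneg (zero_le_one.trans (hX n)) k
  refine ⟨fun n => α * c * Real.exp 1 * n * X n ^ k + 2 * L * n + 1,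
    fun n => by have := hXk n; positivity, tendsto_rpow_one_div_rieszScale hD hM₀ (by positivity)
      (by positivity) k, fun n hn x y hy => ?_⟩
  have h_card : (Fintype.card (Fin (n - 1)) : ℝ) * (2 * (D / (2 * n))) < D := by
    rw [Fintype.card_fin, mul_div_assoc', mul_div_mul_left _ _ two_ne_zero, ← mul_div_assoc,
      div_lt_iff₀ (by positivity), mul_comm]
    gcongr
    exact_mod_cast Nat.sub_lt hn one_pos
  obtain ⟨z, hzC, hz⟩ := exists_forall_le_dist_of_isPreconnected hC hz₀ hz₁ x h_card
  refine (norm_gradient_rieszF_le hα (hQ.differentiable one_ne_zero) hM hL (by positivity)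
    (hCK hzC) (fun j => (hz j).trans_eq (dist_eq_norm _ _)) (hX n) (by have := hXk n; positivity)
    (fun t ht => hck (X n) t (hX n) ht) hy).trans
    (mul_le_mul_of_nonneg_right ?_ (Real.sSup_nonneg (Set.forall_mem_image.mpr
      fun _ _ => rieszF_nonneg)))
  have hE : Real.exp (((n - 1 : ℕ) * (D / (2 * n)) ^ (-α) + 4 * n * M) / X n) ≤ Real.exp 1 := by
    rw [Real.exp_le_exp, div_le_one (by linarith [hX n])]
    simp only [X, rieszScale]
    linarith
  have := mul_le_mul_of_nonneg_left hE (by have := hXk n; positivity : 0 ≤ α * n * (c * X n ^ k))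
  linarith

theorem riesz_gradient_estimate_general {d m : ℕ} (α : ℝ) (hα : 0 < α) (hm : 1 ≤ m)
    (K : Set (EuclideanSpace ℝ (Fin d)))
    (M : Type) [TopologicalSpace M] [ChartedSpace (EuclideanSpace ℝ (Fin m)) M]
    [CompactSpace M]
    (g : M → EuclideanSpace ℝ (Fin d))
    (hemb : Topology.IsEmbedding g)
    (hK : K = Set.range g)
    (Q : EuclideanSpace ℝ (Fin d) → ℝ) (hQ : ContDiff ℝ 1 Q) :
    ∃ C : ℕ → ℝ, (∀ n, 0 < C n) ∧
      Tendsto (fun n : ℕ => C n ^ ((1 : ℝ) / (n : ℝ))) atTop (nhds 1) ∧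
      ∀ n : ℕ, 2 ≤ n → ∀ x : Fin (n - 1) → EuclideanSpace ℝ (Fin d),
        (∀ j, x j ∈ K) → ∀ y ∈ K,
          ‖gradient (rieszF α n Q x) y‖ ≤ C n * sSup (rieszF α n Q x '' K) := by
  subst hK
  rcases isEmpty_or_nonempty M with _ | _
  · exact ⟨fun _ => 1, fun _ => one_pos, by simp, fun _ _ _ _ _ ⟨p, _⟩ => isEmptyElim p⟩
  have : Nonempty (Fin m) := ⟨⟨0, hm⟩⟩
  obtain ⟨C, hCK, hC, hC_nontriv⟩ :=
    exists_isPreconnected_subset_range_nontrivial (H := EuclideanSpace ℝ (Fin m)) hemb.continuous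
      hemb.injective
  obtain ⟨Cn, hpos, hlim, hbound⟩ := exists_norm_gradient_rieszF_le_mul_sSup hα
    (isCompact_range hemb.continuous) hCK hC hC_nontriv hQ
  exact ⟨Cn, hpos, hlim, fun n hn x _ => hbound n (by omega) x⟩

/-- Bernstein-type gradient estimate on the Riesz classes `P_n^Q`:
if `K ⊂ ℝ^d` is a compact smooth `m`-dimensional embedded submanifold (realized as the
image of a smooth embedding `g` of a compact smooth `m`-manifold `M`) and `Q` is `C¹`,
then there are constants `C_n > 0` with `C_n^{1/n} → 1` such that
`sup_K |∇f| ≤ C_n · sup_K f` for every `f ∈ P_n^Q`. -/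
theorem riesz_gradient_estimate {d m : ℕ} (hd : 2 ≤ d) (α : ℝ) (hα : 0 < α)
    (hαd : α ≤ (d : ℝ)) (hm : 1 ≤ m) (hmd : m ≤ d)
    (K : Set (EuclideanSpace ℝ (Fin d)))
    (M : Type) [TopologicalSpace M] [ChartedSpace (EuclideanSpace ℝ (Fin m)) M]
    [IsManifold (𝓡 m) (⊤ : ℕ∞) M] [CompactSpace M]
    (g : M → EuclideanSpace ℝ (Fin d))
    (hg : ContMDiff (𝓡 m) 𝓘(ℝ, EuclideanSpace ℝ (Fin d)) (⊤ : ℕ∞) g)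
    (hemb : Topology.IsEmbedding g)
    (himm : ∀ p : M, Function.Injective (mfderiv (𝓡 m) 𝓘(ℝ, EuclideanSpace ℝ (Fin d)) g p))
    (hK : K = Set.range g)
    (Q : EuclideanSpace ℝ (Fin d) → ℝ) (hQ : ContDiff ℝ 1 Q) :
    ∃ C : ℕ → ℝ, (∀ n, 0 < C n) ∧
      Tendsto (fun n : ℕ => C n ^ ((1 : ℝ) / (n : ℝ))) atTop (nhds 1) ∧
      ∀ n : ℕ, 2 ≤ n → ∀ x : Fin (n - 1) → EuclideanSpace ℝ (Fin d),
        (∀ j, x j ∈ K) → ∀ y ∈ K,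
          ‖gradient (rieszF α n Q x) y‖ ≤ C n * sSup (rieszF α n Q x '' K) :=
  riesz_gradient_estimate_general α hα hm K M g hemb hK Q hQ
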